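/- arXiv:2504.03222 — 3 statements merged into one kernel-verified Lean document; each statement's English description precedes it below -/
import Mathlib

section
/- For 0 < c < 1, every root of the cubic polynomial p(x) = x³ + (1/c + 3 - c - c²) x² + (1-c)(3 + 3c - 2c²) x + 2c(1-c)² in ℂ has strictly negative real part. -/
lemma cubic_hurwitz (a b d : ℝ) (ha : 0 < a) (hb : 0 < b) (hd : 0 < d)
    (habd : d < a * b) (z : ℂ)
    (h : z ^ 3 + (a : ℂ) * z ^ 2 + (b : ℂ) * z + (d : ℂ) = 0) : z.re < 0 := by
  by_contra hx
  push_neg at hx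
  have h1 : (z ^ 3 + (a : ℂ) * z ^ 2 + (b : ℂ) * z + (d : ℂ)).re = 0 := by rw [h]; rfl
  have h2 : (z ^ 3 + (a : ℂ) * z ^ 2 + (b : ℂ) * z + (d : ℂ)).im = 0 := by rw [h]; rfl
  simp only [Complex.add_re, Complex.add_im, Complex.mul_re, Complex.mul_im,
    Complex.ofReal_re, Complex.ofReal_im, pow_succ, pow_zero, one_mul,
    Complex.one_re, Complex.one_im] at h1 h2
  ring_nf at h1 h2
  rcases eq_or_ne z.im 0 with hy | hy
  · rw [hy] at h1
    nlinarith [mul_nonneg (mul_nonneg hx hx) hx, mul_nonneg hx hx]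
  · have h3 : z.im * (z.re * a * 2 + z.re ^ 2 * 3 + b - z.im ^ 2) = 0 := by
      linear_combination h2
    have key : z.im ^ 2 = z.re * a * 2 + z.re ^ 2 * 3 + b := by
      rcases mul_eq_zero.mp h3 with h4 | h4
      · exact absurd h4 hy
      · linarith
    rw [key] at h1
    nlinarith [mul_nonneg (mul_nonneg hx hx) hx, mul_nonneg hx hx,
      mul_nonneg (mul_nonneg hx hx) ha.le, mul_nonneg hx hb.le,
      mul_nonneg hx (mul_pos ha ha).le]

theorem stmt_13 (c : ℝ) (hc : 0 < c) (hc1 : c < 1) (z : ℂ)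
    (hroot : z ^ 3 + ((1 / c + 3 - c - c ^ 2 : ℝ) : ℂ) * z ^ 2 +
      (((1 - c) * (3 + 3 * c - 2 * c ^ 2) : ℝ) : ℂ) * z +
      ((2 * c * (1 - c) ^ 2 : ℝ) : ℂ) = 0) :
    z.re < 0 := by
  have h1c : (0:ℝ) < 1 - c := by linarith
  apply cubic_hurwitz _ _ _ _ _ _ _ z hroot
  · have : 1 < 1 / c := (one_lt_div hc).mpr hc1
    nlinarith
  · nlinarith
  · positivity
  · rw [show (1:ℝ) / c + 3 - c - c ^ 2 = (1 + 3*c - c^2 - c^3) / c by field_simp]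
    rw [div_mul_eq_mul_div, lt_div_iff₀ hc]
    have key : (1 + 3*c - c^2 - c^3) * ((1 - c) * (3 + 3*c - 2*c^2)) - 2*c*(1-c)^2*c
        = (1-c) * (3 + 12*c + 2*c^2 - 10*c^3 - c^4 + 2*c^5) := by ring
    nlinarith [mul_pos h1c hc, mul_pos (mul_pos h1c hc) hc, sq_nonneg c,
      mul_nonneg (mul_nonneg h1c.le hc.le) (sq_nonneg c),
      mul_nonneg (mul_nonneg (mul_nonneg h1c.le hc.le) (sq_nonneg c)) hc.le,
      mul_nonneg (mul_nonneg (mul_nonneg h1c.le hc.le) (sq_nonneg c)) (sq_nonneg c),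
      mul_nonneg (mul_nonneg h1c.le h1c.le) hc.le]
end

section
/- For 0 < c < 1, if the cubic p(x) = x³ + (1/c + 3 - c - c²) x² + (1-c)(3 + 3c - 2c²) x + 2c(1-c)² has three real roots, then every complex number λ satisfying λ² = μ for some root μ of p is purely imaginary. -/
lemma neg_root_imag (r : ℝ) (hr : r < 0) (lam : ℂ) (h : lam ^ 2 = (r : ℂ)) :
    lam.re = 0 := by
  have h1 : lam.re * lam.re - lam.im * lam.im = r := by
    have := congrArg Complex.re h
    simpa [pow_two, Complex.mul_re] using this
  have h2 : lam.re * lam.im = 0 := by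
    have := congrArg Complex.im h
    simp [pow_two, Complex.mul_im] at this
    linarith
  rcases mul_eq_zero.mp h2 with h' | h'
  · exact h'
  · nlinarith

theorem stmt_16 (c : ℝ) (hc : 0 < c) (hc1 : c < 1)
    (hreal : ∃ r₁ r₂ r₃ : ℝ, ∀ x : ℝ,
      x ^ 3 + (1 / c + 3 - c - c ^ 2) * x ^ 2 +
        (1 - c) * (3 + 3 * c - 2 * c ^ 2) * x + 2 * c * (1 - c) ^ 2 =
      (x - r₁) * (x - r₂) * (x - r₃))
    (lam μ : ℂ)
    (hμ : μ ^ 3 + ((1 / c + 3 - c - c ^ 2 : ℝ) : ℂ) * μ ^ 2 +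
      (((1 - c) * (3 + 3 * c - 2 * c ^ 2) : ℝ) : ℂ) * μ +
      ((2 * c * (1 - c) ^ 2 : ℝ) : ℂ) = 0)
    (hlam : lam ^ 2 = μ) :
    lam.re = 0 := by
  obtain ⟨r₁, r₂, r₃, h⟩ := hreal
  -- positivity of coefficients
  have hcinv : 1 < 1 / c := (one_lt_div hc).mpr hc1
  have ha : 0 < 1 / c + 3 - c - c ^ 2 := by nlinarith
  have hb : 0 < (1 - c) * (3 + 3 * c - 2 * c ^ 2) := by nlinarith
  have hd : 0 < 2 * c * (1 - c) ^ 2 := by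
    have := pow_pos (show (0:ℝ) < 1 - c by linarith) 2
    nlinarith
  -- coefficient matching
  have hA : 1 / c + 3 - c - c ^ 2 = -(r₁ + r₂ + r₃) := by
    linear_combination (h 1) / 2 + (h (-1)) / 2 - h 0
  have hB : (1 - c) * (3 + 3 * c - 2 * c ^ 2) =
      r₁ * r₂ + r₁ * r₃ + r₂ * r₃ := by
    linear_combination (h 1) / 2 - (h (-1)) / 2
  have hD : 2 * c * (1 - c) ^ 2 = -(r₁ * r₂ * r₃) := by
    linear_combination h 0
  -- each real root is negative
  have hneg : ∀ r : ℝ, ((r - r₁) * (r - r₂) * (r - r₃) = 0) → r < 0 := by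
    intro r hr
    by_contra hge
    push_neg at hge
    have := h r
    rw [hr] at this
    nlinarith [sq_nonneg r, pow_le_pow_left₀ hge (le_refl r) 3]
  have h1 : r₁ < 0 := hneg r₁ (by ring)
  have h2 : r₂ < 0 := hneg r₂ (by ring)
  have h3 : r₃ < 0 := hneg r₃ (by ring)
  -- lift to ℂ
  have hA' := congrArg (Complex.ofReal) hA
  have hB' := congrArg (Complex.ofReal) hB
  have hD' := congrArg (Complex.ofReal) hD
  push_cast at hA' hB' hD' hμ
  have key : (μ - (r₁ : ℂ)) * (μ - (r₂ : ℂ)) * (μ - (r₃ : ℂ)) = 0 := by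
    linear_combination hμ - μ ^ 2 * hA' - μ * hB' - hD'
  rcases mul_eq_zero.mp key with key | key
  · rcases mul_eq_zero.mp key with key | key
    · exact neg_root_imag r₁ h1 lam (by rw [hlam, sub_eq_zero.mp key])
    · exact neg_root_imag r₂ h2 lam (by rw [hlam, sub_eq_zero.mp key])
  · exact neg_root_imag r₃ h3 lam (by rw [hlam, sub_eq_zero.mp key])
end

section
/- Let c ∈ (0,1), s = √(1-c²). The 6×6 matrix A'' with blocks A₁₁ = [[0,1,s],[-1,0,0],[-s/c,0,0]], A₁₂ = [[c-c²,0,0],[0,c-1,-s],[0,s,c-1]], A₂₁ = diag(1/(c(1+c)), 1/(1+c), 1/(1+c)), A₂₂ = [[0,0,2s/(1+c)],[0,0,0],[0,0,0]] has characteristic polynomial λ⁶ + λ⁴·(1+3c-c²-c³)/(c(1+c)) + λ²·(1-c)(3+3c-2c²)/(1+c)² + 2c(1-c)²/(1+c)³. -/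
/-!
The lower-left block `A₂₁` is invertible (it is diagonal), so the determinant of the block matrix
`λ - A''` is `-det(-A₂₁)` times that of the 3 × 3 Schur complement
`-A₁₂ - (λ - A₁₁)(-A₂₁)⁻¹(λ - A₂₂)`, which is explicit. The parameter `s` then enters only
through `s² = 1 - c²`.
-/

open Matrix

namespace Matrix

variable {n α : Type*} [Fintype n] [DecidableEq n] [CommRing α]

theorem det_fromBlocks_zero_one_one_zero :
    (fromBlocks 0 1 1 0 : Matrix (n ⊕ n) (n ⊕ n) α).det = (-1) ^ Fintype.card n := by
  have hshear : (fromBlocks 0 1 1 0 : Matrix (n ⊕ n) (n ⊕ n) α) =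
      fromBlocks 1 1 0 1 * fromBlocks 1 0 (-1) 1 * fromBlocks 1 1 0 1 * fromBlocks (-1) 0 0 1 := by
    simp [fromBlocks_multiply]
  rw [hshear]
  simp [det_neg]

theorem det_fromBlocks₂₁ (A B C D : Matrix n n α) [Invertible C] :
    (fromBlocks A B C D).det = (-1) ^ Fintype.card n * C.det * (B - A * ⅟C * D).det := by
  have hswap : fromBlocks A B C D = fromBlocks 0 1 1 0 * fromBlocks C D A B := by
    simp [fromBlocks_multiply]
  rw [hswap, det_mul, det_fromBlocks_zero_one_one_zero, det_fromBlocks₁₁]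
  ring

end Matrix

theorem stmt_18 (c s : ℝ) (hc : 0 < c) (hc1 : c < 1)
    (hs : s = Real.sqrt (1 - c ^ 2))
    (A : Matrix (Fin 3 ⊕ Fin 3) (Fin 3 ⊕ Fin 3) ℝ)
    (hA : A = Matrix.fromBlocks
      !![0, 1, s; -1, 0, 0; -s / c, 0, 0]
      !![c - c ^ 2, 0, 0; 0, c - 1, -s; 0, s, c - 1]
      !![1 / (c * (1 + c)), 0, 0; 0, 1 / (1 + c), 0; 0, 0, 1 / (1 + c)]
      !![0, 0, 2 * s / (1 + c); 0, 0, 0; 0, 0, 0]) :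
    ∀ x : ℝ, (x • (1 : Matrix (Fin 3 ⊕ Fin 3) (Fin 3 ⊕ Fin 3) ℝ) - A).det =
      x ^ 6 + x ^ 4 * ((1 + 3 * c - c ^ 2 - c ^ 3) / (c * (1 + c))) +
        x ^ 2 * ((1 - c) * (3 + 3 * c - 2 * c ^ 2) / (1 + c) ^ 2) +
        2 * c * (1 - c) ^ 2 / (1 + c) ^ 3 := by
  intro x
  have hc0 : c ≠ 0 := hc.ne'
  have h1c : 1 + c ≠ 0 := by positivity
  have hs2 : s ^ 2 = 1 - c ^ 2 := by
    rw [hs, Real.sq_sqrt]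
    nlinarith
  have hblocks : x • (1 : Matrix (Fin 3 ⊕ Fin 3) (Fin 3 ⊕ Fin 3) ℝ) - A = fromBlocks
      !![x, -1, -s; 1, x, 0; s / c, 0, x]
      !![c ^ 2 - c, 0, 0; 0, 1 - c, s; 0, -s, 1 - c]
      !![-1 / (c * (1 + c)), 0, 0; 0, -1 / (1 + c), 0; 0, 0, -1 / (1 + c)]
      !![x, 0, -(2 * s / (1 + c)); 0, x, 0; 0, 0, x] := by
    subst hA
    ext (i | i) (j | j) <;> fin_cases i <;> fin_cases j <;> simp [one_apply] <;> field_simp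
  have hinv : !![-1 / (c * (1 + c)), 0, 0; 0, -1 / (1 + c), 0; 0, 0, -1 / (1 + c)] *
      !![-(c * (1 + c)), 0, 0; 0, -(1 + c), 0; 0, 0, -(1 + c)] = 1 := by
    rw [mul_fin_three, one_fin_three]
    simp [field]
  have := invertibleOfRightInverse _ _ hinv
  rw [hblocks, det_fromBlocks₂₁, invOf_eq_right_inv hinv, mul_fin_three, mul_fin_three,
    det_fin_three, det_fin_three]
  simp only [Fintype.card_fin, Fin.isValue, of_apply, cons_val', cons_val_zero, cons_val_fin_one,
    cons_val_one, cons_val, mul_zero, sub_zero, zero_mul, add_zero, mul_neg, neg_mul, neg_add_rev,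
    one_mul, neg_neg, zero_add, Matrix.sub_apply, sub_neg_eq_add, zero_sub]
  field_simp
  rw [hs2]
  ring
end
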